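/- arXiv:0710.0050 — 2 statements merged into one kernel-verified Lean document; each statement's English description precedes it below -/
import Mathlib

section
/- The Λ-linear maps f_r : S_r → Λ defined on the bar basis by f_{2s}([h_1|...|h_{2s}]) = e if [h_1|...|h_{2s}] is strongly alternating and 0 otherwise, and f_{2s+1}([g^i|h_2|...|h_{2s+1}]) = σ_i · f_{2s}([h_2|...|h_{2s+1}]) for 0 ≤ i < k, form a chain map from the standard resolution to the minimal resolution: f_{2s}(∂c) = τ·f_{2s+1}(c) for c ∈ S_{2s+1}, and f_{2s+1}(∂c) = σ·f_{2s+2}(c) for c ∈ S_{2s+2}. -/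
open scoped Classical

/-- The group ring `Λ = R[ℤ_k]`. -/
abbrev GroupRing (R : Type*) [CommRing R] (k : ℕ) :=
  MonoidAlgebra R (Multiplicative (ZMod k))

/-- The generator `g` of `ℤ_k` inside the group ring. -/
noncomputable def gen (R : Type*) [CommRing R] (k : ℕ) : GroupRing R k :=
  MonoidAlgebra.of R (Multiplicative (ZMod k)) (Multiplicative.ofAdd (1 : ZMod k))

/-- `σ_i = e + g + ⋯ + g^{i-1}`. -/
noncomputable def sigmaEl (R : Type*) [CommRing R] (k i : ℕ) : GroupRing R k :=
  ∑ j ∈ Finset.range i, gen R k ^ j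

/-- `S_r = Λ^{⊗(r+1)}` of the standard resolution, realized as the free `R`-module
on the set `(ℤ_k)^{r+1}` of elementary tensors `h_0 ⊗ ⋯ ⊗ h_r`. -/
abbrev StdRes (R : Type*) [CommRing R] (k r : ℕ) : Type _ :=
  (Fin (r + 1) → Multiplicative (ZMod k)) →₀ R

/-- The boundary `∂ : S_{n+1} → S_n`,
`h_0 ⊗ ⋯ ⊗ h_{n+1} ↦ Σ_i (-1)^i h_0 ⊗ ⋯ ⊗ ĥ_i ⊗ ⋯ ⊗ h_{n+1}`. -/
noncomputable def stdBoundary (R : Type*) [CommRing R] (k n : ℕ) :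
    StdRes R k (n + 1) →ₗ[R] StdRes R k n :=
  ∑ i : Fin (n + 2), ((-1 : R) ^ (i : ℕ)) •
    Finsupp.lmapDomain R R (fun f => f ∘ i.succAbove)

/-- The exponent `a ∈ {0,…,k-1}` with `x = g^a`. -/
def toExp {k : ℕ} (x : Multiplicative (ZMod k)) : ℕ := (Multiplicative.toAdd x).val

/-- The bar coordinates of an elementary tensor `x = h_0 ⊗ ⋯ ⊗ h_r`, i.e. the
sequence `(h_1,…,h_r)` with `x = h_0 · [h_1|⋯|h_r]`:
`qseq x i = x_i⁻¹ · x_{i+1}`. -/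
def qseq {k r : ℕ} (x : Fin (r + 1) → Multiplicative (ZMod k)) :
    Fin r → Multiplicative (ZMod k) :=
  fun i => (x i.castSucc)⁻¹ * x i.succ

/-- `[g^{a_1}|⋯|g^{a_{2s}}]` (with `0 ≤ a_i < k`) is strongly alternating iff
`a_{2i+1} + a_{2i+2} ≥ k` for all `0 ≤ i ≤ s-1`.  Here `b j = g^{a_{j+1}}`. -/
def StronglyAltEven (k s : ℕ) (b : Fin (2 * s) → Multiplicative (ZMod k)) : Prop :=
  ∀ i : ℕ, ∀ h : 2 * i + 1 < 2 * s,
    k ≤ toExp (b ⟨2 * i, by omega⟩) + toExp (b ⟨2 * i + 1, h⟩)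

/-- `f_{2s} : S_{2s} → Λ`: the `Λ`-linear map sending a bar element to `e` if it is
strongly alternating and to `0` otherwise.  On the `R`-basis of elementary
tensors `x = h_0·[h_1|⋯|h_{2s}]`, this is `h_0` resp. `0` by `Λ`-linearity. -/
noncomputable def fEven (R : Type*) [CommRing R] (k s : ℕ) :
    StdRes R k (2 * s) →ₗ[R] GroupRing R k :=
  Finsupp.linearCombination R fun x =>
    if StronglyAltEven k s (qseq x) then MonoidAlgebra.single (x 0) (1 : R) else 0

/-- `f_{2s+1} : S_{2s+1} → Λ`: `Λ`-linear with
`f_{2s+1}([g^i|h_2|⋯|h_{2s+1}]) = σ_i · f_{2s}([h_2|⋯|h_{2s+1}])`. -/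
noncomputable def fOdd (R : Type*) [CommRing R] (k s : ℕ) :
    StdRes R k (2 * s + 1) →ₗ[R] GroupRing R k :=
  Finsupp.linearCombination R fun x =>
    if StronglyAltEven k s (fun i => qseq x i.succ) then
      MonoidAlgebra.single (x 0) (1 : R) * sigmaEl R k (toExp (qseq x 0))
    else 0

/-!
On a basis tensor `x = x₀·[b₁|⋯|bₙ]` each `f_r` is `x₀ · φ[b₁|⋯|bₙ]` for a function `φ` of bar
elements, and `∂` turns into the inhomogeneous coboundary
`(δφ)[b₁|⋯|bₙ₊₁] = b₁·φ[b₂|⋯|bₙ₊₁] - Σⱼ (-1)ʲ φ[b₁|⋯|bⱼ₊₁bⱼ₊₂|⋯|bₙ₊₁]`.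
Both chain map identities are therefore identities between functions of a bar element.

Their core: for a bar element of odd length the alternating sum, over all its contractions, of
the indicator of being strongly alternating is the indicator of its tail. This telescopes by
induction on the length, because the carry `c(a, b) = [a + b ≥ k]` of addition modulo `k` is a
2-cocycle. What is left is `σ_a + g^a σ_b = σ_{(a + b) mod k} + c(a, b) σ`.
-/

theorem contractNth_zero_apply_zero {α : Type*} {n : ℕ} (op : α → α → α) (g : Fin (n + 2) → α) :
    Fin.contractNth 0 op g 0 = op (g 0) (Fin.tail g 0) :=
  Fin.contractNth_apply_of_eq _ _ _ _ rfl

theorem tail_contractNth_zero {α : Type*} {n : ℕ} (op : α → α → α) (g : Fin (n + 2) → α) :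
    Fin.tail (Fin.contractNth 0 op g) = Fin.tail (Fin.tail g) :=
  funext fun _ => Fin.contractNth_apply_of_gt _ _ _ _ (Nat.succ_pos _)

theorem contractNth_succ_apply_zero {α : Type*} {n : ℕ} (j : Fin (n + 1)) (op : α → α → α)
    (g : Fin (n + 2) → α) : Fin.contractNth j.succ op g 0 = g 0 :=
  Fin.contractNth_apply_of_lt _ _ _ _ (Nat.succ_pos _)

theorem tail_contractNth_succ {α : Type*} {n : ℕ} (j : Fin (n + 1)) (op : α → α → α)
    (g : Fin (n + 2) → α) :
    Fin.tail (Fin.contractNth j.succ op g) = Fin.contractNth j op (Fin.tail g) := by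
  funext i
  simp only [Fin.tail, Fin.contractNth, Fin.val_succ, Fin.castSucc_succ, add_lt_add_iff_right,
    add_left_inj]

theorem ite_and_eq_mul {A : Type*} [MulZeroOneClass A] (P Q : Prop) [Decidable P] [Decidable Q] :
    (if P ∧ Q then (1 : A) else 0) = (if P then 1 else 0) * (if Q then 1 else 0) := by
  rw [ite_zero_mul_ite_zero, mul_one]

section Carry

variable {k : ℕ} [NeZero k]

theorem toExp_lt (u : Multiplicative (ZMod k)) : toExp u < k := ZMod.val_lt _

theorem toExp_mul (u v : Multiplicative (ZMod k)) :
    toExp (u * v) = (toExp u + toExp v) % k := ZMod.val_add _ _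

theorem carry_cocycle (A : Type*) [AddMonoidWithOne A] (u v w : Multiplicative (ZMod k)) :
    (if k ≤ toExp u + toExp v then (1 : A) else 0) +
        (if k ≤ toExp (u * v) + toExp w then 1 else 0) =
      (if k ≤ toExp v + toExp w then 1 else 0) +
        (if k ≤ toExp u + toExp (v * w) then 1 else 0) := by
  have hu := toExp_lt u; have hv := toExp_lt v; have hw := toExp_lt w
  rw [toExp_mul, toExp_mul, Nat.add_mod_eq_ite, Nat.add_mod_eq_ite, Nat.mod_eq_of_lt hu,
    Nat.mod_eq_of_lt hv, Nat.mod_eq_of_lt hw]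
  split_ifs <;> first | omega | simp

end Carry

section StronglyAlternating

variable {k : ℕ}

theorem stronglyAltEven_zero (b : Fin (2 * 0) → Multiplicative (ZMod k)) :
    StronglyAltEven k 0 b :=
  fun _ h => by omega

theorem stronglyAltEven_succ_iff {s : ℕ} (b : Fin (2 * s + 2) → Multiplicative (ZMod k)) :
    StronglyAltEven k (s + 1) b ↔
      k ≤ toExp (b 0) + toExp (Fin.tail b 0) ∧ StronglyAltEven k s (Fin.tail (Fin.tail b)) := by
  refine ⟨fun h => ⟨h 0 (by omega), fun i hi => h (i + 1) (by omega)⟩, ?_⟩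
  rintro ⟨h0, h⟩ (_ | i) hi
  · exact h0
  · exact h i (by omega)

theorem alternating_sum_stronglyAltEven_contractNth [NeZero k] (A : Type*) [CommRing A]
    (s : ℕ) (b : Fin (2 * s + 1) → Multiplicative (ZMod k)) :
    ∑ j : Fin (2 * s + 1), (-1 : A) ^ (j : ℕ) *
        (if StronglyAltEven k s (Fin.contractNth j (· * ·) b) then 1 else 0) =
      if StronglyAltEven k s (Fin.tail b) then 1 else 0 := by
  induction s with
  | zero => simp [stronglyAltEven_zero]
  | succ s ih =>
    -- the inner index type `Fin (2 * (s + 1))` is `Fin (2 * s + 1 + 1)` only up to unfolding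
    rw [Fin.sum_univ_succ]; erw [Fin.sum_univ_succ]
    simp only [stronglyAltEven_succ_iff, ite_and_eq_mul, contractNth_zero_apply_zero,
      tail_contractNth_zero, contractNth_succ_apply_zero, tail_contractNth_succ, Fin.val_succ,
      Fin.val_zero, pow_succ, pow_zero, one_mul, mul_neg, mul_one, neg_neg, neg_mul]
    rw [Finset.sum_congr rfl fun j _ => mul_left_comm _ _ _, ← Finset.mul_sum]
    erw [ih]
    linear_combination
      (if StronglyAltEven k s (Fin.tail (Fin.tail (Fin.tail b))) then (1 : A) else 0) *
        carry_cocycle A (b 0) (Fin.tail b 0) (Fin.tail (Fin.tail b) 0)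

end StronglyAlternating

section GroupRing

variable (R : Type*) [CommRing R] (k : ℕ)

theorem gen_pow (j : ℕ) :
    gen R k ^ j = MonoidAlgebra.single (Multiplicative.ofAdd (j : ZMod k)) 1 := by
  rw [gen, ← map_pow, ← ofAdd_nsmul, nsmul_one, MonoidAlgebra.of_apply]

theorem gen_pow_card : gen R k ^ k = 1 := by
  rw [gen_pow, ZMod.natCast_self]
  rfl

theorem gen_pow_toExp [NeZero k] (u : Multiplicative (ZMod k)) :
    gen R k ^ toExp u = MonoidAlgebra.single u 1 := by
  rw [gen_pow, toExp, ZMod.natCast_zmod_val]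
  rfl

theorem gen_sub_one_mul_sigmaEl (i : ℕ) : (gen R k - 1) * sigmaEl R k i = gen R k ^ i - 1 :=
  mul_geom_sum _ _

theorem sigmaEl_add (m n : ℕ) :
    sigmaEl R k (m + n) = sigmaEl R k m + gen R k ^ m * sigmaEl R k n := by
  simp only [sigmaEl, Finset.sum_range_add, Finset.mul_sum, pow_add]

theorem sigmaEl_add_gen_pow_mul_sigmaEl [NeZero k] (u v : Multiplicative (ZMod k)) :
    sigmaEl R k (toExp u) + gen R k ^ toExp u * sigmaEl R k (toExp v) =
      sigmaEl R k (toExp (u * v)) +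
        (if k ≤ toExp u + toExp v then 1 else 0) * sigmaEl R k k := by
  rw [← sigmaEl_add, toExp_mul, Nat.add_mod_eq_ite, Nat.mod_eq_of_lt (toExp_lt u),
    Nat.mod_eq_of_lt (toExp_lt v)]
  split_ifs with h
  · rw [← Nat.add_sub_of_le h, sigmaEl_add, gen_pow_card, one_mul, add_comm,
      Nat.add_sub_cancel_left, one_mul]
  · rw [zero_mul, add_zero]

end GroupRing

section Bar

variable {k : ℕ}

theorem partialProd_qseq {n : ℕ} (x : Fin (n + 1) → Multiplicative (ZMod k)) (i : Fin (n + 1)) :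
    Fin.partialProd (qseq x) i = (x 0)⁻¹ * x i := by
  induction i using Fin.induction with
  | zero => rw [Fin.partialProd_zero, inv_mul_cancel]
  | succ i ih => rw [Fin.partialProd_succ, ih, qseq, mul_assoc, mul_inv_cancel_left]

theorem qseq_comp_zero_succAbove {n : ℕ} (x : Fin (n + 2) → Multiplicative (ZMod k)) :
    qseq (x ∘ Fin.succAbove 0) = Fin.tail (qseq x) := by
  funext i
  simp [qseq, Fin.tail]

theorem qseq_comp_succ_succAbove {n : ℕ} (x : Fin (n + 2) → Multiplicative (ZMod k))
    (j : Fin (n + 1)) :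
    qseq (x ∘ j.succ.succAbove) = Fin.contractNth j (· * ·) (qseq x) := by
  funext i
  rw [← Fin.inv_partialProd_mul_eq_contractNth, partialProd_qseq, partialProd_qseq,
    ← Fin.succ_succAbove_succ, mul_inv_rev, inv_inv, mul_assoc, mul_inv_cancel_left]
  rfl

theorem single_mul_single_qseq (R : Type*) [CommRing R] {n : ℕ}
    (x : Fin (n + 2) → Multiplicative (ZMod k)) :
    MonoidAlgebra.single (x 0) (1 : R) * MonoidAlgebra.single (qseq x 0) 1 =
      MonoidAlgebra.single (x 1) 1 := by
  rw [MonoidAlgebra.single_mul_single, mul_one, qseq]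
  congr 1
  exact mul_inv_cancel_left _ _

end Bar

section OfBar

variable (R : Type*) [CommRing R] (k : ℕ)

noncomputable def ofBar {n : ℕ} (φ : (Fin n → Multiplicative (ZMod k)) → GroupRing R k) :
    StdRes R k n →ₗ[R] GroupRing R k :=
  Finsupp.linearCombination R fun x => MonoidAlgebra.single (x 0) 1 * φ (qseq x)

noncomputable def barCoboundary {n : ℕ} (φ : (Fin n → Multiplicative (ZMod k)) → GroupRing R k)
    (b : Fin (n + 1) → Multiplicative (ZMod k)) : GroupRing R k :=
  MonoidAlgebra.single (b 0) 1 * φ (Fin.tail b) -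
    ∑ j : Fin (n + 1), (-1) ^ (j : ℕ) * φ (Fin.contractNth j (· * ·) b)

variable {R k}

theorem ofBar_single {n : ℕ} (φ : (Fin n → Multiplicative (ZMod k)) → GroupRing R k)
    (x : Fin (n + 1) → Multiplicative (ZMod k)) :
    ofBar R k φ (Finsupp.single x 1) = MonoidAlgebra.single (x 0) 1 * φ (qseq x) := by
  rw [ofBar, Finsupp.linearCombination_single, one_smul]

theorem ofBar_const_mul {n : ℕ} (a : GroupRing R k)
    (φ : (Fin n → Multiplicative (ZMod k)) → GroupRing R k) (c : StdRes R k n) :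
    ofBar R k (fun b => a * φ b) c = a * ofBar R k φ c := by
  simp only [ofBar, Finsupp.linearCombination_apply, Finsupp.mul_sum, mul_smul_comm, mul_left_comm]

theorem ofBar_stdBoundary_single {n : ℕ}
    (φ : (Fin n → Multiplicative (ZMod k)) → GroupRing R k)
    (x : Fin (n + 2) → Multiplicative (ZMod k)) :
    ofBar R k φ (stdBoundary R k n (Finsupp.single x 1)) =
      MonoidAlgebra.single (x 0) 1 * barCoboundary R k φ (qseq x) := by
  simp only [stdBoundary, LinearMap.sum_apply, LinearMap.smul_apply, Finsupp.lmapDomain_apply,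
    Finsupp.mapDomain_single, map_sum, map_smul, ofBar_single]
  rw [Fin.sum_univ_succ, qseq_comp_zero_succAbove]
  simp only [qseq_comp_succ_succAbove, Function.comp_apply, Fin.succ_succAbove_zero,
    Fin.zero_succAbove, Fin.val_zero, pow_zero, Fin.val_succ, pow_succ, Algebra.smul_def,
    map_mul, map_pow, map_neg, map_one, Fin.succ_zero_eq_one]
  rw [barCoboundary, ← single_mul_single_qseq, mul_sub, Finset.mul_sum, sub_eq_add_neg,
    ← Finset.sum_neg_distrib]
  congr 1
  · ring
  · exact Finset.sum_congr rfl fun j _ => by ring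

theorem ofBar_stdBoundary {n : ℕ} (φ : (Fin n → Multiplicative (ZMod k)) → GroupRing R k)
    (c : StdRes R k (n + 1)) :
    ofBar R k φ (stdBoundary R k n c) = ofBar R k (barCoboundary R k φ) c := by
  have h : (ofBar R k φ).comp (stdBoundary R k n) = ofBar R k (barCoboundary R k φ) :=
    Finsupp.lhom_ext' fun x => LinearMap.ext_ring (by
      simp only [LinearMap.comp_apply, Finsupp.lsingle_apply, ofBar_stdBoundary_single,
        ofBar_single])
  exact LinearMap.congr_fun h c

end OfBar

section ChainMap

variable (R : Type*) [CommRing R] (k s : ℕ)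

noncomputable def evenBar (b : Fin (2 * s) → Multiplicative (ZMod k)) : GroupRing R k :=
  if StronglyAltEven k s b then 1 else 0

noncomputable def oddBar (b : Fin (2 * s + 1) → Multiplicative (ZMod k)) : GroupRing R k :=
  sigmaEl R k (toExp (b 0)) * evenBar R k s (Fin.tail b)

theorem fEven_eq_ofBar : fEven R k s = ofBar R k (evenBar R k s) := by
  simp only [fEven, ofBar, evenBar, mul_ite, mul_one, mul_zero]

theorem fOdd_eq_ofBar : fOdd R k s = ofBar R k (oddBar R k s) := by
  simp only [fOdd, ofBar, oddBar, evenBar, mul_ite, mul_one, mul_zero]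
  rfl

variable [NeZero k]

theorem barCoboundary_evenBar :
    barCoboundary R k (evenBar R k s) = fun b => (gen R k - 1) * oddBar R k s b := by
  funext b
  rw [barCoboundary, evenBar, oddBar, ← gen_pow_toExp, ← mul_assoc, gen_sub_one_mul_sigmaEl]
  simp only [evenBar]
  rw [alternating_sum_stronglyAltEven_contractNth]
  ring

theorem barCoboundary_oddBar :
    barCoboundary R k (oddBar R k s) = fun b => sigmaEl R k k * evenBar R k (s + 1) b := by
  funext b
  rw [barCoboundary, Fin.sum_univ_succ]
  simp only [oddBar, contractNth_zero_apply_zero, tail_contractNth_zero,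
    contractNth_succ_apply_zero, tail_contractNth_succ, Fin.val_zero, Fin.val_succ, pow_zero,
    pow_succ, one_mul, mul_neg, mul_one, neg_mul]
  rw [Finset.sum_neg_distrib, Finset.sum_congr rfl fun j _ => mul_left_comm _ _ _, ← Finset.mul_sum]
  simp only [evenBar, stronglyAltEven_succ_iff, ite_and_eq_mul]
  rw [alternating_sum_stronglyAltEven_contractNth, ← gen_pow_toExp]
  linear_combination
    (if StronglyAltEven k s (Fin.tail (Fin.tail b)) then (1 : GroupRing R k) else 0) *
      sigmaEl_add_gen_pow_mul_sigmaEl R k (b 0) (Fin.tail b 0)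

end ChainMap

/-- the maps `f_r` form a chain map from the standard resolution to
the minimal resolution: `f_{2s}(∂c) = τ·f_{2s+1}(c)` for `c ∈ S_{2s+1}` and
`f_{2s+1}(∂c) = σ·f_{2s+2}(c)` for `c ∈ S_{2s+2}`. -/
theorem stmt9 (k : ℕ) (hk : 2 ≤ k) (R : Type*) [CommRing R] (s : ℕ) :
    (∀ c : StdRes R k (2 * s + 1),
      fEven R k s (stdBoundary R k (2 * s) c) = (gen R k - 1) * fOdd R k s c) ∧
    (∀ c : StdRes R k (2 * s + 2),
      fOdd R k s (stdBoundary R k (2 * s + 1) c) =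
        sigmaEl R k k * fEven R k (s + 1) c) := by
  have : NeZero k := ⟨by omega⟩
  refine ⟨fun c => ?_, fun c => ?_⟩
  · rw [fEven_eq_ofBar, fOdd_eq_ofBar, ofBar_stdBoundary, barCoboundary_evenBar, ofBar_const_mul]
  · rw [fOdd_eq_ofBar, fEven_eq_ofBar, ofBar_stdBoundary, barCoboundary_oddBar]
    exact ofBar_const_mul _ _ c
end

section
/- Generalized Z_k-Tucker lemma: Let C_• be a chain complex of free Λ-modules with Λ-linear boundaries, φ_• : C_• → M_• a Λ-linear chain map to the minimal resolution, and (x_i)_{0≤i≤r} a generalized r-sphere in C_• (i.e. ∂x_i = σx_{i-1} for even i and ∂x_i = τx_{i-1} for odd i, 0 < i ≤ r). Define α_i = u(σ·φ_i(x_i)), where u : Λ → R evaluates at e. Then α_i ≡ α_0 (mod k·R) for all 0 ≤ i ≤ r. -/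
/-- `σ = e + g + ⋯ + g^{k-1}`. -/
noncomputable def sigma (R : Type*) [CommRing R] (k : ℕ) : GroupRing R k :=
  ∑ j ∈ Finset.range k, gen R k ^ j

/-- The element of `Λ` by which multiplication gives the boundary `∂_r` of the
minimal resolution: `σ` for `r` even (positive), `τ = g - e` for `r` odd. -/
noncomputable def minB (R : Type*) [CommRing R] (k r : ℕ) : GroupRing R k :=
  if Even r then sigma R k else gen R k - 1

/-- The evaluation `u : Λ → R` at the neutral element, `Σ α_i g^i ↦ α_0`. -/
def evalOne {R : Type*} [CommRing R] {k : ℕ} (y : GroupRing R k) : R :=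
  y.coeff (1 : Multiplicative (ZMod k))

open Finset

theorem geom_sum_mul_eq_nsmul_of_mul_eq_self {A : Type*} [Semiring A] {g z : A}
    (h : g * z = z) (n : ℕ) : (∑ j ∈ range n, g ^ j) * z = n • z := by
  have hpow : ∀ j : ℕ, g ^ j * z = z := fun j => by
    induction j with
    | zero => rw [pow_zero, one_mul]
    | succ j ih => rw [pow_succ', mul_assoc, ih, h]
  simp only [sum_mul, hpow, sum_const, card_range]

theorem Submodule.sub_mem_of_forall_succ_sub_mem {S M : Type*} [Semiring S] [AddCommGroup M]
    [Module S M] (p : Submodule S M) {f : ℕ → M} {r : ℕ}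
    (h : ∀ i < r, f (i + 1) - f i ∈ p) : ∀ i ≤ r, f i - f 0 ∈ p := fun i hi => by
  rw [← sum_range_sub]
  exact p.sum_mem fun j hj => h j (by rw [mem_range] at hj; omega)

section

variable {R : Type*} [CommRing R] {k : ℕ}

theorem evalOne_sub (y z : GroupRing R k) :
    evalOne (y - z) = evalOne y - evalOne z := by
  rw [evalOne, MonoidAlgebra.coeff_sub, Finsupp.sub_apply]; rfl

theorem evalOne_nsmul (n : ℕ) (y : GroupRing R k) :
    evalOne (n • y) = n * evalOne y := by
  rw [evalOne, MonoidAlgebra.coeff_smul, Finsupp.smul_apply, nsmul_eq_mul]; rfl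

theorem evalOne_sigma_mul_mem_span_of_minB_mul_eq_zero (m : ℕ)
    {z : GroupRing R k} (h : minB R k m * z = 0) :
    evalOne (sigma R k * z) ∈ Ideal.span {(k : R)} := by
  unfold minB at h
  split_ifs at h
  · rw [h]
    exact (Ideal.span _).zero_mem
  · rw [sub_mul, one_mul, sub_eq_zero] at h
    rw [sigma, geom_sum_mul_eq_nsmul_of_mul_eq_self h, evalOne_nsmul]
    exact Ideal.mem_span_singleton'.mpr ⟨_, mul_comm _ _⟩

end

theorem stmt16_general (k : ℕ) (R : Type*) [CommRing R]
    (C : ℕ → Type*) [∀ i, AddCommGroup (C i)] [∀ i, Module (GroupRing R k) (C i)]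
    (d : ∀ i : ℕ, C (i + 1) →ₗ[GroupRing R k] C i)
    (φ : ∀ i : ℕ, C i →ₗ[GroupRing R k] GroupRing R k)
    (hφ : ∀ (i : ℕ) (c : C (i + 1)), φ i (d i c) = minB R k (i + 1) * φ (i + 1) c)
    (r : ℕ) (x : ∀ i : ℕ, C i)
    (hx : ∀ i : ℕ, i < r → d i (x (i + 1)) = minB R k (i + 1) • x i) :
    ∀ i : ℕ, i ≤ r →
      evalOne (sigma R k * φ i (x i)) - evalOne (sigma R k * φ 0 (x 0)) ∈
        Ideal.span {(k : R)} := by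
  refine (Ideal.span {(k : R)}).sub_mem_of_forall_succ_sub_mem fun i hi => ?_
  have hcycle : minB R k (i + 1) * (φ (i + 1) (x (i + 1)) - φ i (x i)) = 0 := by
    rw [mul_sub, ← hφ, hx i hi, map_smul, smul_eq_mul, sub_self]
  rw [← evalOne_sub, ← mul_sub]
  exact evalOne_sigma_mul_mem_span_of_minB_mul_eq_zero (i + 1) hcycle

/-- generalized `ℤ_k`-Tucker lemma: let `C_•` be a chain complex
of free `Λ`-modules with `Λ`-linear boundaries, `φ_• : C_• → M_•` a `Λ`-linear
chain map to the minimal resolution, and `(x_i)_{0 ≤ i ≤ r}` a generalized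
`r`-sphere (`∂x_i = σx_{i-1}` for even `i`, `∂x_i = τx_{i-1}` for odd `i`).
With `α_i = u(σ·φ_i(x_i))`, we have `α_i ≡ α_0 (mod kR)` for all `0 ≤ i ≤ r`. -/
theorem stmt16 (k : ℕ) (hk : 2 ≤ k) (R : Type*) [CommRing R]
    (C : ℕ → Type*) [∀ i, AddCommGroup (C i)] [∀ i, Module (GroupRing R k) (C i)]
    [∀ i, Module.Free (GroupRing R k) (C i)]
    (d : ∀ i : ℕ, C (i + 1) →ₗ[GroupRing R k] C i)
    (hdd : ∀ (i : ℕ) (c : C (i + 2)), d i (d (i + 1) c) = 0)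
    (φ : ∀ i : ℕ, C i →ₗ[GroupRing R k] GroupRing R k)
    (hφ : ∀ (i : ℕ) (c : C (i + 1)), φ i (d i c) = minB R k (i + 1) * φ (i + 1) c)
    (r : ℕ) (x : ∀ i : ℕ, C i)
    (hx : ∀ i : ℕ, i < r → d i (x (i + 1)) = minB R k (i + 1) • x i) :
    ∀ i : ℕ, i ≤ r →
      evalOne (sigma R k * φ i (x i)) - evalOne (sigma R k * φ 0 (x 0)) ∈
        Ideal.span {(k : R)} :=
  stmt16_general k R C d φ hφ r x hx
end
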